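/- arXiv:1209.5804 — 5 statements merged into one kernel-verified Lean document; each statement's English description precedes it below -/
import Mathlib

section
/- Let a, b ∈ [0,1]. Let f : ℝ → EuclideanSpace ℝ (Fin 4) be continuous on [0,1] with f 0 = y(a,b), f 1 = z(a,b), and f t ∈ S for every t ∈ Set.Icc (0:ℝ) 1. Then eVariationOn f (Set.Icc 0 1) ≥ ENNReal.ofReal (Real.sqrt 2). -/
open scoped ENNReal

/-- The union of four 2-dimensional faces of the unit cube `[0,1]^4`. -/
def S : Set (EuclideanSpace ℝ (Fin 4)) :=
  ({v | v 1 = 0 ∧ v 3 = 0} ∪ {v | v 1 = 0 ∧ v 2 = 1} ∪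
     {v | v 0 = 1 ∧ v 3 = 0} ∪ {v | v 0 = 1 ∧ v 2 = 1}) ∩
    {v | ∀ i, v i ∈ Set.Icc (0 : ℝ) 1}

/-- The point `y(a,b) = (a, 0, b, 0)`. -/
noncomputable def yPt (a b : ℝ) : EuclideanSpace ℝ (Fin 4) :=
  (WithLp.equiv 2 (Fin 4 → ℝ)).symm ![a, 0, b, 0]

/-- The point `z(a,b) = (1, a, 1, b)`. -/
noncomputable def zPt (a b : ℝ) : EuclideanSpace ℝ (Fin 4) :=
  (WithLp.equiv 2 (Fin 4 → ℝ)).symm ![1, a, 1, b]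

/-!
Each pair of coordinates `(v 0, v 1)` and `(v 2, v 3)` of a point of `S` lies on the L-shaped path
`L` from `(0,0)` through the corner `(1,0)` to `(1,1)`, and `v 0 + v 1`, `v 2 + v 3` are the arc
length parameters along these two copies of `L`. In these coordinates `y(a,b)` becomes `(a, b)` and
`z(a,b)` becomes `(a + 1, b + 1)`, at distance `√2`. Since `L` consists of two axis-parallel
segments, passing to arc length does not increase distances between two points that do not lie on
opposite sides of the corner in either factor. By continuity a path from `y` to `z` can be cut at
two times `u ≤ w` so that each of the three pieces has such endpoints, and the triangle inequality
in the arc length coordinates gives the bound.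
-/

open Set

section Variation

variable {α E : Type*} [LinearOrder α] [PseudoEMetricSpace E]

theorem edist_add_edist_add_edist_le_eVariationOn (f : α → E) {s : Set α} {a b c d : α}
    (ha : a ∈ s) (hb : b ∈ s) (hc : c ∈ s) (hd : d ∈ s) (hab : a ≤ b) (hbc : b ≤ c)
    (hcd : c ≤ d) :
    edist (f a) (f b) + edist (f b) (f c) + edist (f c) (f d) ≤ eVariationOn f s :=
  calc edist (f a) (f b) + edist (f b) (f c) + edist (f c) (f d)
      ≤ eVariationOn f (s ∩ Icc a b) + eVariationOn f (s ∩ Icc b c) +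
          eVariationOn f (s ∩ Icc c d) := by
        gcongr <;> apply eVariationOn.edist_le <;> simp_all
    _ = eVariationOn f (s ∩ Icc a d) := by
        rw [eVariationOn.Icc_add_Icc f hab hbc hb,
          eVariationOn.Icc_add_Icc f (hab.trans hbc) hcd hc]
    _ ≤ eVariationOn f s := eVariationOn.mono f inter_subset_left

end Variation

/-- `x` and `y` lie weakly on the same side of `c`. -/
def SameSide (c x y : ℝ) : Prop :=
  0 ≤ (x - c) * (y - c)

section Partition

variable {p q : ℝ → ℝ} {u w c : ℝ}

theorem lt_and_lt_of_mul_neg (hp : ContinuousOn p (Icc u w))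
    (hq : ContinuousOn q (Icc u w)) (hmid : ∀ t ∈ Ioo u w, (p t - c) * (q t - c) < 0)
    {t₀ : ℝ} (ht₀ : t₀ ∈ Ioo u w) (hlt : q t₀ < p t₀) :
    ∀ t ∈ Ioo u w, q t < c ∧ c < p t := by
  have hsub : Ioo u w ⊆ Icc u w := Ioo_subset_Icc_self
  intro t ht
  -- `p = q` is impossible on `Ioo u w`, so by the intermediate value theorem `q < p` throughout.
  have hqp : q t < p t := by
    by_contra! hle
    obtain ⟨t', ht', heq⟩ := isPreconnected_Ioo.intermediate_value₂ ht₀ ht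
      (hq.mono hsub) (hp.mono hsub) hlt.le hle
    have := hmid t' ht'
    rw [heq] at this
    nlinarith
  have := hmid t ht
  constructor <;> nlinarith

theorem corner_of_mul_neg (huw : u < w) (hp : ContinuousOn p (Icc u w))
    (hq : ContinuousOn q (Icc u w)) (hu : p u ≤ c) (hw : q w ≥ c)
    (hmid : ∀ t ∈ Ioo u w, q t < c ∧ c < p t) : p u = c ∧ q w = c := by
  have hcl : Icc u w = closure (Ioo u w) := (closure_Ioo huw.ne).symm
  refine ⟨le_antisymm hu ?_, le_antisymm ?_ hw⟩
  · exact ContinuousWithinAt.closure_le (by rw [← hcl]; exact left_mem_Icc.2 huw.le)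
      continuousWithinAt_const ((hp u (left_mem_Icc.2 huw.le)).mono Ioo_subset_Icc_self)
      fun t ht => (hmid t ht).2.le
  · exact ContinuousWithinAt.closure_le (by rw [← hcl]; exact right_mem_Icc.2 huw.le)
      ((hq w (right_mem_Icc.2 huw.le)).mono Ioo_subset_Icc_self) continuousWithinAt_const
      fun t ht => (hmid t ht).1.le

theorem sameSide_of_forall_mul_neg (huw : u < w) (hp : ContinuousOn p (Icc u w))
    (hq : ContinuousOn q (Icc u w)) (hu : p u ≤ c ∧ q u ≤ c) (hw : c ≤ p w ∧ c ≤ q w)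
    (hmid : ∀ t ∈ Ioo u w, (p t - c) * (q t - c) < 0) :
    SameSide c (p u) (p w) ∧ SameSide c (q u) (q w) := by
  obtain ⟨t₀, ht₀⟩ := nonempty_Ioo.2 huw
  have hne : p t₀ ≠ q t₀ := fun h => by
    have := hmid t₀ ht₀
    rw [h] at this
    nlinarith
  rcases hne.lt_or_gt with hlt | hlt
  · have hmid' : ∀ t ∈ Ioo u w, (q t - c) * (p t - c) < 0 := fun t ht => by
      rw [mul_comm]; exact hmid t ht
    obtain ⟨hqu, hpw⟩ := corner_of_mul_neg huw hq hp hu.2 hw.1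
      (lt_and_lt_of_mul_neg hq hp hmid' ht₀ hlt)
    simp [SameSide, hqu, hpw]
  · obtain ⟨hpu, hqw⟩ := corner_of_mul_neg huw hp hq hu.1 hw.2
      (lt_and_lt_of_mul_neg hp hq hmid ht₀ hlt)
    simp [SameSide, hpu, hqw]

theorem exists_sameSide_partition {a b : ℝ} (hab : a ≤ b) (hp : ContinuousOn p (Icc a b))
    (hq : ContinuousOn q (Icc a b)) (ha : p a ≤ c ∧ q a ≤ c) (hb : c ≤ p b ∧ c ≤ q b) :
    ∃ u w, a ≤ u ∧ u ≤ w ∧ w ≤ b ∧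
      (SameSide c (p a) (p u) ∧ SameSide c (p u) (p w) ∧ SameSide c (p w) (p b)) ∧
      (SameSide c (q a) (q u) ∧ SameSide c (q u) (q w) ∧ SameSide c (q w) (q b)) := by
  -- `u` is the last time with `p, q ≤ c`, and `w` the first time after `u` with `p, q ≥ c`.
  obtain ⟨u, ⟨⟨⟨hau, hub⟩, hpu⟩, -, hqu⟩, humax⟩ :=
    (isCompact_Icc.of_isClosed_subset
      ((hp.preimage_isClosed_of_isClosed isClosed_Icc isClosed_Iic).inter
        (hq.preimage_isClosed_of_isClosed isClosed_Icc isClosed_Iic))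
      (inter_subset_left.trans inter_subset_left)).exists_isGreatest
      ⟨a, ⟨left_mem_Icc.2 hab, ha.1⟩, left_mem_Icc.2 hab, ha.2⟩
  have hsub : Icc u b ⊆ Icc a b := Icc_subset_Icc_left hau
  obtain ⟨w, ⟨⟨⟨huw, hwb⟩, hpw⟩, -, hqw⟩, hwmin⟩ :=
    (isCompact_Icc.of_isClosed_subset
      (((hp.mono hsub).preimage_isClosed_of_isClosed isClosed_Icc isClosed_Ici).inter
        ((hq.mono hsub).preimage_isClosed_of_isClosed isClosed_Icc isClosed_Ici))
      (inter_subset_left.trans inter_subset_left)).exists_isLeast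
      ⟨b, ⟨right_mem_Icc.2 hub, hb.1⟩, right_mem_Icc.2 hub, hb.2⟩
  simp only [mem_preimage, mem_Iic, mem_Ici] at hpu hqu hpw hqw
  have hmid : SameSide c (p u) (p w) ∧ SameSide c (q u) (q w) := by
    rcases huw.eq_or_lt with rfl | hlt
    · exact ⟨mul_self_nonneg _, mul_self_nonneg _⟩
    refine sameSide_of_forall_mul_neg hlt (hp.mono (Icc_subset_Icc hau hwb))
      (hq.mono (Icc_subset_Icc hau hwb)) ⟨hpu, hqu⟩ ⟨hpw, hqw⟩ fun t ht => ?_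
    have htab : t ∈ Icc a b := ⟨hau.trans ht.1.le, ht.2.le.trans hwb⟩
    have hT₁ : ¬(p t ≤ c ∧ q t ≤ c) := fun h =>
      (humax ⟨⟨htab, h.1⟩, htab, h.2⟩).not_gt ht.1
    have hT₂ : ¬(c ≤ p t ∧ c ≤ q t) := fun h =>
      (hwmin ⟨⟨⟨ht.1.le, htab.2⟩, h.1⟩, ⟨ht.1.le, htab.2⟩, h.2⟩).not_gt ht.2
    rcases lt_or_ge (p t) c with hpt | hpt <;> rcases lt_or_ge (q t) c with hqt | hqt
    · exact absurd ⟨hpt.le, hqt.le⟩ hT₁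
    · exact mul_neg_of_neg_of_pos (sub_neg.2 hpt) (sub_pos.2 (hqt.lt_of_ne fun h =>
        hT₁ ⟨hpt.le, h.ge⟩))
    · exact mul_neg_of_pos_of_neg (sub_pos.2 (hpt.lt_of_ne fun h =>
        hT₁ ⟨h.ge, hqt.le⟩)) (sub_neg.2 hqt)
    · exact absurd ⟨hpt, hqt⟩ hT₂
  refine ⟨u, w, hau, huw, hwb, ⟨?_, hmid.1, ?_⟩, ⟨?_, hmid.2, ?_⟩⟩ <;>
    unfold SameSide <;> nlinarith

end Partition

theorem mul_sub_nonpos_of_sameSide {x₀ x₁ y₀ y₁ : ℝ} (hx : x₁ = 0 ∨ x₀ = 1)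
    (hy : y₁ = 0 ∨ y₀ = 1) (h : SameSide 1 (x₀ + x₁) (y₀ + y₁)) :
    (x₀ - y₀) * (x₁ - y₁) ≤ 0 := by
  unfold SameSide at h
  rcases hx with rfl | rfl <;> rcases hy with rfl | rfl <;> nlinarith

theorem corner_of_mem_S {v : EuclideanSpace ℝ (Fin 4)} (hv : v ∈ S) :
    (v 1 = 0 ∨ v 0 = 1) ∧ (v 3 = 0 ∨ v 2 = 1) := by
  rcases hv.1 with ((h | h) | h) | h <;> simp [h.1, h.2]

/-- Arc length coordinates on the two L-shaped factors of `S`. -/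
noncomputable def arcCoords (v : EuclideanSpace ℝ (Fin 4)) : EuclideanSpace ℝ (Fin 2) :=
  !₂[v 0 + v 1, v 2 + v 3]

theorem dist_arcCoords_le {v w : EuclideanSpace ℝ (Fin 4)} (hv : v ∈ S) (hw : w ∈ S)
    (h₀₁ : SameSide 1 (v 0 + v 1) (w 0 + w 1)) (h₂₃ : SameSide 1 (v 2 + v 3) (w 2 + w 3)) :
    dist (arcCoords v) (arcCoords w) ≤ dist v w := by
  have := mul_sub_nonpos_of_sameSide (corner_of_mem_S hv).1 (corner_of_mem_S hw).1 h₀₁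
  have := mul_sub_nonpos_of_sameSide (corner_of_mem_S hv).2 (corner_of_mem_S hw).2 h₂₃
  rw [EuclideanSpace.dist_eq, EuclideanSpace.dist_eq]
  apply Real.sqrt_le_sqrt
  simp [arcCoords, Fin.sum_univ_four, Real.dist_eq]
  nlinarith

theorem dist_arcCoords_yPt_zPt (a b : ℝ) :
    dist (arcCoords (yPt a b)) (arcCoords (zPt a b)) = √2 := by
  simp [EuclideanSpace.dist_eq, arcCoords, yPt, zPt, Real.dist_eq]
  norm_num

theorem stmt0 (a b : ℝ) (ha : a ∈ Set.Icc (0 : ℝ) 1) (hb : b ∈ Set.Icc (0 : ℝ) 1)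
    (f : ℝ → EuclideanSpace ℝ (Fin 4)) (hf : ContinuousOn f (Set.Icc 0 1))
    (h0 : f 0 = yPt a b) (h1 : f 1 = zPt a b)
    (hS : ∀ t ∈ Set.Icc (0 : ℝ) 1, f t ∈ S) :
    ENNReal.ofReal (Real.sqrt 2) ≤ eVariationOn f (Set.Icc 0 1) := by
  have hcoord (i : Fin 4) : ContinuousOn (fun t => f t i) (Icc 0 1) :=
    (EuclideanSpace.proj i).continuous.comp_continuousOn hf
  obtain ⟨u, w, h0u, huw, hw1, ⟨hp₁, hp₂, hp₃⟩, ⟨hq₁, hq₂, hq₃⟩⟩ :=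
    exists_sameSide_partition (p := fun t => f t 0 + f t 1) (q := fun t => f t 2 + f t 3)
      (c := 1) zero_le_one ((hcoord 0).add (hcoord 1)) ((hcoord 2).add (hcoord 3))
      (by simp [h0, yPt, ha.2, hb.2]) (by simp [h1, zPt, ha.1, hb.1])
  have hu : u ∈ Icc (0 : ℝ) 1 := ⟨h0u, huw.trans hw1⟩
  have hw : w ∈ Icc (0 : ℝ) 1 := ⟨h0u.trans huw, hw1⟩
  have step {s t : ℝ} (hs : s ∈ Icc (0 : ℝ) 1) (ht : t ∈ Icc (0 : ℝ) 1)
      (h₀₁ : SameSide 1 (f s 0 + f s 1) (f t 0 + f t 1))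
      (h₂₃ : SameSide 1 (f s 2 + f s 3) (f t 2 + f t 3)) :
      edist (arcCoords (f s)) (arcCoords (f t)) ≤ edist (f s) (f t) := by
    rw [edist_dist, edist_dist]
    exact ENNReal.ofReal_le_ofReal (dist_arcCoords_le (hS s hs) (hS t ht) h₀₁ h₂₃)
  have h0I : (0 : ℝ) ∈ Icc (0 : ℝ) 1 := left_mem_Icc.2 zero_le_one
  have h1I : (1 : ℝ) ∈ Icc (0 : ℝ) 1 := right_mem_Icc.2 zero_le_one
  calc ENNReal.ofReal √2 = edist (arcCoords (f 0)) (arcCoords (f 1)) := by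
        rw [edist_dist, h0, h1, dist_arcCoords_yPt_zPt]
    _ ≤ edist (arcCoords (f 0)) (arcCoords (f u)) + edist (arcCoords (f u)) (arcCoords (f w)) +
          edist (arcCoords (f w)) (arcCoords (f 1)) := edist_triangle4 _ _ _ _
    _ ≤ edist (f 0) (f u) + edist (f u) (f w) + edist (f w) (f 1) := by
        gcongr
        exacts [step h0I hu hp₁ hq₁, step hu hw hp₂ hq₂, step hw h1I hp₃ hq₃]
    _ ≤ eVariationOn f (Icc 0 1) :=
        edist_add_edist_add_edist_le_eVariationOn f h0I hu hw h1I h0u huw hw1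
end

section
/- Let a, b ∈ [0,1]. The infimum, over all f : ℝ → EuclideanSpace ℝ (Fin 4) that are continuous with f 0 = y(a,b), f 1 = z(a,b), and f t ∈ S for every t ∈ Set.Icc (0:ℝ) 1, of eVariationOn f (Set.Icc 0 1) equals ENNReal.ofReal (Real.sqrt 2). -/
open scoped ENNReal

/-!
Each of the two coordinate pairs `(v 0, v 1)` and `(v 2, v 3)` of a point of `S` lies on the
L-shaped path `[0,1] × {0} ∪ {1} × [0,1]`, and `S` is the product of these two L's. For the upper
bound, walk along the diagonal of the unfolded `2 × 2` square: each L is traversed at unit speed,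
so the path is `√2`-Lipschitz. For the lower bound, fold each L onto `[0,1]` by
`(x, y) ↦ x - y`; this fold is `1`-Lipschitz on the L, hence
`|Δ(v 0 - v 1)| + |Δ(v 2 - v 3)| ≤ √2 · dist` on `S`. A path from `y(a,b)` to `z(a,b)` must pass
through both corners `v 0 - v 1 = 1` and `v 2 - v 3 = 1` (intermediate value theorem on the
unfolded coordinates `v 0 + v 1`, `v 2 + v 3`), so along the chain `y, corner, corner, z` each
folded coordinate varies by at least `1`, and the length is at least `2 / √2 = √2`.
-/

open Set

section Variation

variable {α E : Type*} [LinearOrder α] [PseudoMetricSpace E]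

theorem ofReal_dist_add_dist_add_dist_le_eVariationOn (f : α → E) {a t₁ t₂ b : α}
    (h₁ : a ≤ t₁) (h₁₂ : t₁ ≤ t₂) (h₂ : t₂ ≤ b) :
    ENNReal.ofReal (dist (f a) (f t₁) + dist (f t₁) (f t₂) + dist (f t₂) (f b)) ≤
      eVariationOn f (Icc a b) := by
  have hsplit : eVariationOn f (Icc a t₁) + eVariationOn f (Icc t₁ t₂) +
      eVariationOn f (Icc t₂ b) = eVariationOn f (Icc a b) := by
    simpa only [univ_inter] using
      (congrArg (· + eVariationOn f (univ ∩ Icc t₂ b))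
        (eVariationOn.Icc_add_Icc f h₁ h₁₂ (mem_univ t₁))).trans
      (eVariationOn.Icc_add_Icc f (h₁.trans h₁₂) h₂ (mem_univ t₂))
  rw [← hsplit, ENNReal.ofReal_add (by positivity) dist_nonneg,
    ENNReal.ofReal_add dist_nonneg dist_nonneg, ← edist_dist, ← edist_dist, ← edist_dist]
  gcongr <;> apply eVariationOn.edist_le <;> simp [*]

theorem LipschitzOnWith.eVariationOn_Icc_le {f : ℝ → E} {C : NNReal} {a b : ℝ}
    (hf : LipschitzOnWith C f (Icc a b)) :
    eVariationOn f (Icc a b) ≤ C * ENNReal.ofReal (b - a) := by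
  simpa [eVariationOn_id_Icc] using hf.comp_eVariationOn_le (g := id) (mapsTo_id _)

end Variation

theorem abs_add_abs_le_sqrt_two_mul_sqrt (x y : ℝ) :
    |x| + |y| ≤ √2 * √(x ^ 2 + y ^ 2) := by
  rw [← Real.sqrt_mul zero_le_two]
  apply Real.le_sqrt_of_sq_le
  nlinarith [sq_nonneg (|x| - |y|), sq_abs x, sq_abs y]

theorem exists_sub_eq_one_of_corner {g h : ℝ → ℝ} {a b : ℝ} (hab : a ≤ b)
    (hg : ContinuousOn g (Icc a b)) (hh : ContinuousOn h (Icc a b))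
    (hcorner : ∀ t ∈ Icc a b, h t = 0 ∨ g t = 1) (ha : g a + h a ≤ 1) (hb : 1 ≤ g b + h b) :
    ∃ s ∈ Icc a b, g s - h s = 1 := by
  obtain ⟨s, hs, hsum⟩ := intermediate_value_Icc hab (hg.add hh) ⟨ha, hb⟩
  refine ⟨s, hs, ?_⟩
  rcases hcorner s hs with h0 | g1 <;> simp only [Pi.add_apply] at hsum <;> linarith

theorem sq_sub_sub_le_of_corner {x y x' y' : ℝ} (h : y = 0 ∨ x = 1) (h' : y' = 0 ∨ x' = 1)
    (hx : x ≤ 1) (hy : 0 ≤ y) (hx' : x' ≤ 1) (hy' : 0 ≤ y') :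
    ((x' - y') - (x - y)) ^ 2 ≤ (x' - x) ^ 2 + (y' - y) ^ 2 := by
  rcases h with rfl | rfl <;> rcases h' with rfl | rfl <;> nlinarith

theorem dist_eq_sqrt_fin_four (p q : EuclideanSpace ℝ (Fin 4)) :
    dist p q = √((p 0 - q 0) ^ 2 + (p 1 - q 1) ^ 2 + (p 2 - q 2) ^ 2 + (p 3 - q 3) ^ 2) := by
  simp [EuclideanSpace.dist_eq, Fin.sum_univ_four, Real.dist_eq, sq_abs]

theorem mem_S_iff {v : EuclideanSpace ℝ (Fin 4)} :
    v ∈ S ↔ ((v 1 = 0 ∨ v 0 = 1) ∧ (v 3 = 0 ∨ v 2 = 1)) ∧ ∀ i, v i ∈ Icc (0 : ℝ) 1 := by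
  simp only [S, mem_inter_iff, mem_union, mem_ofPred_eq]
  tauto

def foldX (v : EuclideanSpace ℝ (Fin 4)) : ℝ := v 0 - v 1

def foldY (v : EuclideanSpace ℝ (Fin 4)) : ℝ := v 2 - v 3

theorem abs_foldX_sub_add_abs_foldY_sub_le {p q : EuclideanSpace ℝ (Fin 4)} (hp : p ∈ S)
    (hq : q ∈ S) : |foldX q - foldX p| + |foldY q - foldY p| ≤ √2 * dist p q := by
  obtain ⟨⟨hp₁, hp₂⟩, hpI⟩ := mem_S_iff.1 hp
  obtain ⟨⟨hq₁, hq₂⟩, hqI⟩ := mem_S_iff.1 hq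
  have hX := sq_sub_sub_le_of_corner hp₁ hq₁ (hpI 0).2 (hpI 1).1 (hqI 0).2 (hqI 1).1
  have hY := sq_sub_sub_le_of_corner hp₂ hq₂ (hpI 2).2 (hpI 3).1 (hqI 2).2 (hqI 3).1
  calc |foldX q - foldX p| + |foldY q - foldY p|
      ≤ √2 * √((foldX q - foldX p) ^ 2 + (foldY q - foldY p) ^ 2) :=
        abs_add_abs_le_sqrt_two_mul_sqrt _ _
    _ ≤ √2 * dist p q := by
        rw [dist_eq_sqrt_fin_four, foldX, foldX, foldY, foldY]
        refine mul_le_mul_of_nonneg_left (Real.sqrt_le_sqrt ?_) (Real.sqrt_nonneg 2)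
        linarith

theorem two_sub_le_abs_sub_add_abs_sub_add_abs_sub {x₀ x₁ x₂ x₃ : ℝ} (h : x₁ = 1 ∨ x₂ = 1) :
    2 - (x₀ + x₃) ≤ |x₁ - x₀| + |x₂ - x₁| + |x₃ - x₂| := by
  rcases h with rfl | rfl
  · linarith [le_abs_self (1 - x₀), neg_abs_le (x₂ - 1), neg_abs_le (x₃ - x₂)]
  · linarith [le_abs_self (x₁ - x₀), le_abs_self (1 - x₁), neg_abs_le (x₃ - 1)]

theorem sqrt_two_le_dist_add_dist_add_dist {p₀ p₁ p₂ p₃ : EuclideanSpace ℝ (Fin 4)}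
    (h₀ : p₀ ∈ S) (h₁ : p₁ ∈ S) (h₂ : p₂ ∈ S) (h₃ : p₃ ∈ S)
    (hX : foldX p₁ = 1 ∨ foldX p₂ = 1) (hY : foldY p₁ = 1 ∨ foldY p₂ = 1)
    (hX₀₃ : foldX p₀ + foldX p₃ = 1) (hY₀₃ : foldY p₀ + foldY p₃ = 1) :
    √2 ≤ dist p₀ p₁ + dist p₁ p₂ + dist p₂ p₃ := by
  have hvarX := two_sub_le_abs_sub_add_abs_sub_add_abs_sub (x₀ := foldX p₀) (x₃ := foldX p₃) hX
  have hvarY := two_sub_le_abs_sub_add_abs_sub_add_abs_sub (x₀ := foldY p₀) (x₃ := foldY p₃) hY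
  have h₀₁ := abs_foldX_sub_add_abs_foldY_sub_le h₀ h₁
  have h₁₂ := abs_foldX_sub_add_abs_foldY_sub_le h₁ h₂
  have h₂₃ := abs_foldX_sub_add_abs_foldY_sub_le h₂ h₃
  have hsq : √2 * √2 = 2 := Real.mul_self_sqrt zero_le_two
  nlinarith [Real.sqrt_nonneg 2]

theorem sqrt_two_le_eVariationOn {a b : ℝ} (ha : a ∈ Icc (0 : ℝ) 1) (hb : b ∈ Icc (0 : ℝ) 1)
    {f : ℝ → EuclideanSpace ℝ (Fin 4)} (hf : Continuous f) (h₀ : f 0 = yPt a b)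
    (h₁ : f 1 = zPt a b) (hS : MapsTo f (Icc 0 1) S) :
    ENNReal.ofReal √2 ≤ eVariationOn f (Icc 0 1) := by
  have hcoord (i : Fin 4) : ContinuousOn (fun t => f t i) (Icc 0 1) := by fun_prop
  obtain ⟨s, hs, hXs⟩ := exists_sub_eq_one_of_corner zero_le_one (hcoord 0) (hcoord 1)
    (fun t ht => (mem_S_iff.1 (hS ht)).1.1) (by simp [h₀, yPt, ha.2]) (by simp [h₁, zPt, ha.1])
  obtain ⟨u, hu, hYu⟩ := exists_sub_eq_one_of_corner zero_le_one (hcoord 2) (hcoord 3)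
    (fun t ht => (mem_S_iff.1 (hS ht)).1.2) (by simp [h₀, yPt, hb.2]) (by simp [h₁, zPt, hb.1])
  have hmem (t : ℝ) (h0t : 0 ≤ t) (ht1 : t ≤ 1) : f t ∈ S := hS ⟨h0t, ht1⟩
  have hchain (t₁ t₂ : ℝ) (h0 : 0 ≤ t₁) (h12 : t₁ ≤ t₂) (h1 : t₂ ≤ 1)
      (hX : foldX (f t₁) = 1 ∨ foldX (f t₂) = 1) (hY : foldY (f t₁) = 1 ∨ foldY (f t₂) = 1) :
      ENNReal.ofReal √2 ≤ eVariationOn f (Icc 0 1) :=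
    (ENNReal.ofReal_le_ofReal (sqrt_two_le_dist_add_dist_add_dist (hmem 0 le_rfl zero_le_one)
      (hmem t₁ h0 (h12.trans h1)) (hmem t₂ (h0.trans h12) h1) (hmem 1 zero_le_one le_rfl) hX hY
      (by simp [foldX, h₀, h₁, yPt, zPt]) (by simp [foldY, h₀, h₁, yPt, zPt]))).trans
      (ofReal_dist_add_dist_add_dist_le_eVariationOn f h0 h12 h1)
  rcases le_total s u with hsu | hus
  · exact hchain s u hs.1 hsu hu.2 (Or.inl hXs) (Or.inr hYu)
  · exact hchain u s hu.1 hus hs.2 (Or.inr hXs) (Or.inl hYu)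

theorem sq_min_sub_min_add_sq_max_sub_max_le (c x y : ℝ) :
    (min (c + x) 1 - min (c + y) 1) ^ 2 + (max (c + x - 1) 0 - max (c + y - 1) 0) ^ 2 ≤
      (x - y) ^ 2 := by
  rcases le_total (c + x) 1 with hx | hx <;> rcases le_total (c + y) 1 with hy | hy <;>
    simp only [min_eq_left, min_eq_right, max_eq_left, max_eq_right, sub_nonpos, sub_nonneg,
      hx, hy] <;> nlinarith

section DiagonalPath

/-- The image in `S` of the diagonal `t ↦ (a + t, b + t)` of the unfolded `2 × 2` square. -/
noncomputable def diagonalPath (a b : ℝ) (t : ℝ) : EuclideanSpace ℝ (Fin 4) :=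
  WithLp.toLp 2 ![min (a + t) 1, max (a + t - 1) 0, min (b + t) 1, max (b + t - 1) 0]

variable {a b : ℝ}

theorem continuous_diagonalPath : Continuous (diagonalPath a b) := by
  refine (PiLp.continuous_toLp 2 _).comp (continuous_pi fun i => ?_)
  fin_cases i <;> simp <;> fun_prop

theorem diagonalPath_zero (ha : a ∈ Icc (0 : ℝ) 1) (hb : b ∈ Icc (0 : ℝ) 1) :
    diagonalPath a b 0 = yPt a b := by
  ext i
  fin_cases i <;> simp [diagonalPath, yPt, ha.2, hb.2]

theorem diagonalPath_one (ha : a ∈ Icc (0 : ℝ) 1) (hb : b ∈ Icc (0 : ℝ) 1) :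
    diagonalPath a b 1 = zPt a b := by
  ext i
  fin_cases i <;> simp [diagonalPath, zPt, ha.1, hb.1]

theorem mapsTo_diagonalPath (ha : a ∈ Icc (0 : ℝ) 1) (hb : b ∈ Icc (0 : ℝ) 1) :
    MapsTo (diagonalPath a b) (Icc 0 1) S := by
  intro t ht
  have hcorner (c : ℝ) : max (c + t - 1) 0 = 0 ∨ min (c + t) 1 = 1 := by
    rcases le_total (c + t) 1 with h | h
    · exact Or.inl (max_eq_right (by linarith))
    · exact Or.inr (min_eq_right h)
  refine mem_S_iff.2 ⟨⟨hcorner a, hcorner b⟩, fun i => ?_⟩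
  fin_cases i <;> simp [diagonalPath] <;> linarith [ha.1, ha.2, hb.1, hb.2, ht.1, ht.2]

theorem lipschitzWith_diagonalPath :
    LipschitzWith (Real.toNNReal √2) (diagonalPath a b) := by
  refine LipschitzWith.of_dist_le_mul fun t s => ?_
  have hX := sq_min_sub_min_add_sq_max_sub_max_le a t s
  have hY := sq_min_sub_min_add_sq_max_sub_max_le b t s
  calc dist (diagonalPath a b t) (diagonalPath a b s)
      ≤ √(2 * (t - s) ^ 2) := by
        rw [dist_eq_sqrt_fin_four]
        gcongr
        simp only [diagonalPath, PiLp.toLp_apply, Matrix.cons_val]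
        linarith
    _ = Real.toNNReal √2 * dist t s := by
        rw [Real.sqrt_mul zero_le_two, Real.sqrt_sq_eq_abs,
          Real.coe_toNNReal _ (Real.sqrt_nonneg 2), Real.dist_eq]

end DiagonalPath

theorem stmt1 (a b : ℝ) (ha : a ∈ Set.Icc (0 : ℝ) 1) (hb : b ∈ Set.Icc (0 : ℝ) 1) :
    sInf {L : ℝ≥0∞ | ∃ f : ℝ → EuclideanSpace ℝ (Fin 4),
        Continuous f ∧ f 0 = yPt a b ∧ f 1 = zPt a b ∧
          (∀ t ∈ Set.Icc (0 : ℝ) 1, f t ∈ S) ∧ L = eVariationOn f (Set.Icc 0 1)} =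
      ENNReal.ofReal (Real.sqrt 2) := by
  have hvar := lipschitzWith_diagonalPath.lipschitzOnWith.eVariationOn_Icc_le
    (f := diagonalPath a b) (a := 0) (b := 1)
  rw [sub_zero, ENNReal.ofReal_one, mul_one] at hvar
  refine le_antisymm ((sInf_le ?_).trans hvar) (le_sInf ?_)
  · exact ⟨diagonalPath a b, continuous_diagonalPath, diagonalPath_zero ha hb,
      diagonalPath_one ha hb, mapsTo_diagonalPath ha hb, rfl⟩
  · rintro L ⟨f, hf, h₀, h₁, hS, rfl⟩
    exact sqrt_two_le_eVariationOn ha hb hf h₀ h₁ hS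
end

section
/- Let b ∈ [0,1]. Let f : ℝ → EuclideanSpace ℝ (Fin 3) be continuous on [0,1] with f 0 = (0, b, 0), f 1 = (1, 1, b), and f t ∈ T for every t ∈ Set.Icc (0:ℝ) 1. Then eVariationOn f (Set.Icc 0 1) ≥ ENNReal.ofReal (Real.sqrt 2). -/
open scoped ENNReal

/-- The union of two 2-dimensional faces of the unit cube `[0,1]^3`. -/
def T : Set (EuclideanSpace ℝ (Fin 3)) :=
  ({v | v 2 = 0} ∪ {v | v 1 = 1}) ∩ {v | ∀ i, v i ∈ Set.Icc (0 : ℝ) 1}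

/-!
The path starts at `(0, b, 0)`, where `v 1 + v 2 = b ≤ 1`, and ends at `(1, 1, b)`, where
`v 1 + v 2 = 1 + b ≥ 1`, so by the intermediate value theorem it meets `v 1 + v 2 = 1`, which inside
`T` is the common edge `{(x, 1, 0)}` of the two squares. Unfolding the squares into a `2 × 1`
rectangle, the two legs through `(x, 1, 0)` have lengths `√(x² + (1 - b)²)` and `√((1 - x)² + b²)`,
and by Minkowski's inequality their sum is at least `√(1² + 1²) = √2`.
-/

open Set

lemma Real.sqrt_add_sq_add_sq_le (a b c d : ℝ) :
    √((a + c) ^ 2 + (b + d) ^ 2) ≤ √(a ^ 2 + b ^ 2) + √(c ^ 2 + d ^ 2) := by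
  simpa [EuclideanSpace.norm_eq, Fin.sum_univ_two] using norm_add_le !₂[a, b] !₂[c, d]

lemma edist_add_edist_le_eVariationOn {α E : Type*} [LinearOrder α] [PseudoEMetricSpace E]
    (f : α → E) {a b c : α} (hac : a ≤ c) (hcb : c ≤ b) :
    edist (f a) (f c) + edist (f c) (f b) ≤ eVariationOn f (Icc a b) := calc
  _ ≤ eVariationOn f (Icc a c) + eVariationOn f (Icc c b) :=
    add_le_add (eVariationOn.edist_le f (left_mem_Icc.2 hac) (right_mem_Icc.2 hac))
      (eVariationOn.edist_le f (left_mem_Icc.2 hcb) (right_mem_Icc.2 hcb))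
  _ ≤ eVariationOn f (Icc a c ∪ Icc c b) :=
    eVariationOn.add_le_union f fun _ hx _ hy => hx.2.trans hy.1
  _ = eVariationOn f (Icc a b) := by rw [Icc_union_Icc_eq_Icc hac hcb]

lemma apply_one_eq_one_and_apply_two_eq_zero_of_mem_T {v : EuclideanSpace ℝ (Fin 3)} (hv : v ∈ T)
    (hsum : v 1 + v 2 = 1) : v 1 = 1 ∧ v 2 = 0 := by
  rcases hv.1 with (h : v 2 = 0) | (h : v 1 = 1) <;> constructor <;> linarith

lemma exists_mem_Icc_apply_one_eq_one_and_apply_two_eq_zero {f : ℝ → EuclideanSpace ℝ (Fin 3)}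
    {a b : ℝ} (hab : a ≤ b) (hf : ContinuousOn f (Icc a b)) (hT : ∀ t ∈ Icc a b, f t ∈ T)
    (ha : f a 1 + f a 2 ≤ 1) (hb : 1 ≤ f b 1 + f b 2) :
    ∃ c ∈ Icc a b, f c 1 = 1 ∧ f c 2 = 0 := by
  have hcoord (i : Fin 3) : ContinuousOn (fun t => f t i) (Icc a b) :=
    (continuous_apply i).comp_continuousOn ((PiLp.continuous_ofLp 2 _).comp_continuousOn hf)
  obtain ⟨c, hc, hsum⟩ := intermediate_value_Icc hab ((hcoord 1).add (hcoord 2)) ⟨ha, hb⟩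
  exact ⟨c, hc, apply_one_eq_one_and_apply_two_eq_zero_of_mem_T (hT c hc) hsum⟩

lemma sqrt_two_le_dist_add_dist (b : ℝ) {v : EuclideanSpace ℝ (Fin 3)} (hv1 : v 1 = 1)
    (hv2 : v 2 = 0) :
    √2 ≤ dist ((WithLp.equiv 2 (Fin 3 → ℝ)).symm ![0, b, 0]) v
      + dist v ((WithLp.equiv 2 (Fin 3 → ℝ)).symm ![1, 1, b]) := by
  simp only [EuclideanSpace.dist_eq, Fin.sum_univ_three, hv1, hv2, WithLp.equiv_symm_apply,
    Matrix.cons_val_zero, Matrix.cons_val_one, Matrix.cons_val_two,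
    Matrix.head_cons, Matrix.tail_cons, Real.dist_eq, sq_abs]
  convert Real.sqrt_add_sq_add_sq_le (v 0) (1 - b) (1 - v 0) b using 3 <;> ring

theorem stmt2 (b : ℝ) (hb : b ∈ Set.Icc (0 : ℝ) 1)
    (f : ℝ → EuclideanSpace ℝ (Fin 3)) (hf : ContinuousOn f (Set.Icc 0 1))
    (h0 : f 0 = (WithLp.equiv 2 (Fin 3 → ℝ)).symm ![0, b, 0])
    (h1 : f 1 = (WithLp.equiv 2 (Fin 3 → ℝ)).symm ![1, 1, b])
    (hT : ∀ t ∈ Set.Icc (0 : ℝ) 1, f t ∈ T) :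
    ENNReal.ofReal (Real.sqrt 2) ≤ eVariationOn f (Set.Icc 0 1) := by
  obtain ⟨c, hc, hc1, hc2⟩ :=
    exists_mem_Icc_apply_one_eq_one_and_apply_two_eq_zero zero_le_one hf hT
      (by simp [h0, hb.2]) (by simp [h1, hb.1])
  calc ENNReal.ofReal √2
      ≤ ENNReal.ofReal (dist (f 0) (f c) + dist (f c) (f 1)) :=
        ENNReal.ofReal_le_ofReal (h0 ▸ h1 ▸ sqrt_two_le_dist_add_dist b hc1 hc2)
    _ = edist (f 0) (f c) + edist (f c) (f 1) := by
        rw [ENNReal.ofReal_add dist_nonneg dist_nonneg, edist_dist, edist_dist]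
    _ ≤ eVariationOn f (Icc 0 1) := edist_add_edist_le_eVariationOn f hc.1 hc.2
end

section
/- Let m ≥ 1, let a, b ∈ [0,1], and let f : ℝ → EuclideanSpace ℝ (Fin (4 + m)) be continuous on [0,1]. Let π : EuclideanSpace ℝ (Fin (4+m)) → EuclideanSpace ℝ (Fin 4) be the projection onto the first four coordinates. Assume (π ∘ f) 0 = y(a,b), (π ∘ f) 1 = z(a,b), and (π ∘ f) t ∈ S for every t ∈ Set.Icc (0:ℝ) 1. If there is an index j among the last m coordinates with f 0 j ≠ f 1 j, then eVariationOn f (Set.Icc 0 1) > ENNReal.ofReal (Real.sqrt 2). -/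
/-!
The map `(x₀ + x₁, x₂ + x₃)` unfolds the four squares of `S` into the square `[0,2]²`,
isometrically on each square, so it does not increase the length of a path that moves from
square to square; `y(a,b)` and `z(a,b)` land at `(a, b)` and `(1 + a, 1 + b)`, at distance `√2`.
Adding as a third coordinate the extra coordinate `4 + j` on which the endpoints of the path
differ raises the endpoint distance to `√(2 + Δ²) > √2`. Since the path may switch squares
infinitely often, the lengths are compared by continuous induction, using only that points
of the path close to a given one lie on a common square with it.
-/

open scoped ENNReal

/-- Projection of `EuclideanSpace ℝ (Fin (4+m))` onto the first four coordinates. -/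
noncomputable def projFour (m : ℕ) (v : EuclideanSpace ℝ (Fin (4 + m))) :
    EuclideanSpace ℝ (Fin 4) :=
  (WithLp.equiv 2 (Fin 4 → ℝ)).symm fun i => v (Fin.castAdd m i)

open Set Filter Topology

theorem edist_le_eVariationOn_of_eventually {E F : Type*} [PseudoEMetricSpace E]
    [PseudoEMetricSpace F] {f : ℝ → E} {g : ℝ → F} {a b : ℝ} (hab : a ≤ b)
    (h : ∀ t ∈ Icc a b, ∀ᶠ s in 𝓝[Icc a b] t, edist (g s) (g t) ≤ edist (f s) (f t)) :
    edist (g a) (g b) ≤ eVariationOn f (Icc a b) := by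
  set A := {x ∈ Icc a b | edist (g a) (g x) ≤ eVariationOn f (Icc a x)}
  have extend : ∀ x ∈ A, ∀ y ∈ Icc a b, x ≤ y →
      edist (g x) (g y) ≤ edist (f x) (f y) → y ∈ A := by
    rintro x ⟨hx, hAx⟩ y hy hxy hgf
    refine ⟨hy, ?_⟩
    calc edist (g a) (g y) ≤ edist (g a) (g x) + edist (g x) (g y) := edist_triangle _ _ _
      _ ≤ eVariationOn f (Icc a x) + eVariationOn f (Icc x y) :=
          add_le_add hAx (hgf.trans (eVariationOn.edist_le f (left_mem_Icc.2 hxy)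
            (right_mem_Icc.2 hxy)))
      _ = eVariationOn f (Icc a y) := by
          simpa using eVariationOn.Icc_add_Icc f hx.1 hxy (mem_univ x)
  have haA : a ∈ A := ⟨left_mem_Icc.2 hab, by simp⟩
  have hbdd : BddAbove A := ⟨b, fun x hx => hx.1.2⟩
  set c := sSup A
  have hc : c ∈ Icc a b := ⟨le_csSup hbdd haA, csSup_le ⟨a, haA⟩ fun x hx => hx.1.2⟩
  obtain ⟨δ, hδ, hnear⟩ := Metric.eventually_nhds_iff.1 (eventually_nhdsWithin_iff.1 (h c hc))
  have hcA : c ∈ A := by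
    obtain ⟨x, hxA, hx⟩ := exists_lt_of_lt_csSup ⟨a, haA⟩ (sub_lt_self c hδ)
    have hxc : x ≤ c := le_csSup hbdd hxA
    refine extend x hxA c hc hxc (hnear ?_ hxA.1)
    rw [Real.dist_eq, abs_lt]
    constructor <;> linarith
  obtain hcb | hcb := hc.2.eq_or_lt
  · simpa only [hcb] using hcA.2
  set y := min b (c + δ / 2)
  have hcy : c < y := lt_min hcb (by linarith)
  have hy : y ∈ Icc a b := ⟨hc.1.trans hcy.le, min_le_left _ _⟩
  have hyA : y ∈ A := by
    refine extend c hcA y hy hcy.le ?_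
    rw [edist_comm, edist_comm (f c)]
    refine hnear ?_ hy
    rw [Real.dist_eq, abs_lt]
    constructor <;> linarith [min_le_right b (c + δ / 2)]
  exact absurd (le_csSup hbdd hyA) hcy.not_ge

theorem eventually_forall_mem_imp_mem {X ι : Type*} [TopologicalSpace X] [Finite ι]
    {F : ι → Set X} (hF : ∀ i, IsClosed (F i)) (x : X) :
    ∀ᶠ y in 𝓝 x, ∀ i, y ∈ F i → x ∈ F i := by
  refine eventually_all.2 fun i => ?_
  by_cases hx : x ∈ F i
  · exact Eventually.of_forall fun _ _ => hx
  · filter_upwards [(hF i).isOpen_compl.mem_nhds hx] with y hy hyF using absurd hyF hy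

def face : Fin 4 → Set (EuclideanSpace ℝ (Fin 4)) :=
  ![{v | v 1 = 0 ∧ v 3 = 0}, {v | v 1 = 0 ∧ v 2 = 1}, {v | v 0 = 1 ∧ v 3 = 0},
    {v | v 0 = 1 ∧ v 2 = 1}]

theorem isClosed_face (i : Fin 4) : IsClosed (face i) := by
  have hcoord (k : Fin 4) (r : ℝ) : IsClosed {v : EuclideanSpace ℝ (Fin 4) | v k = r} :=
    isClosed_eq (PiLp.continuous_apply 2 _ k) continuous_const
  fin_cases i <;> exact (hcoord _ _).inter (hcoord _ _)

theorem S_subset_iUnion_face : S ⊆ ⋃ i, face i := by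
  rintro v ⟨(((hv | hv) | hv) | hv), -⟩
  exacts [mem_iUnion_of_mem 0 hv, mem_iUnion_of_mem 1 hv, mem_iUnion_of_mem 2 hv,
    mem_iUnion_of_mem 3 hv]

theorem sub_mul_sub_eq_zero_of_mem_face {x y : EuclideanSpace ℝ (Fin 4)} {i : Fin 4}
    (hx : x ∈ face i) (hy : y ∈ face i) :
    (x 0 - y 0) * (x 1 - y 1) = 0 ∧ (x 2 - y 2) * (x 3 - y 3) = 0 := by
  fin_cases i <;> simp_all [face]

@[simp]
theorem projFour_apply (m : ℕ) (v : EuclideanSpace ℝ (Fin (4 + m))) (i : Fin 4) :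
    projFour m v i = v (Fin.castAdd m i) :=
  rfl

theorem continuous_projFour (m : ℕ) : Continuous (projFour m) :=
  (PiLp.continuous_toLp 2 _).comp
    (continuous_pi fun i => PiLp.continuous_apply 2 _ (Fin.castAdd m i))

noncomputable def planarUnfolding (m : ℕ) (j : Fin m) (u : EuclideanSpace ℝ (Fin (4 + m))) :
    EuclideanSpace ℝ (Fin 3) :=
  !₂[projFour m u 0 + projFour m u 1, projFour m u 2 + projFour m u 3, u (Fin.natAdd 4 j)]

theorem dist_planarUnfolding_le {m : ℕ} (j : Fin m) {u w : EuclideanSpace ℝ (Fin (4 + m))}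
    {i : Fin 4} (hu : projFour m u ∈ face i) (hw : projFour m w ∈ face i) :
    dist (planarUnfolding m j u) (planarUnfolding m j w) ≤ dist u w := by
  obtain ⟨h01, h23⟩ := sub_mul_sub_eq_zero_of_mem_face hu hw
  have hj := Finset.single_le_sum (fun k _ => sq_nonneg (dist (u (Fin.natAdd 4 k))
    (w (Fin.natAdd 4 k)))) (Finset.mem_univ j)
  rw [← sq_le_sq₀ dist_nonneg dist_nonneg, EuclideanSpace.dist_sq_eq,
    EuclideanSpace.dist_sq_eq, Fin.sum_univ_add, Fin.sum_univ_three, Fin.sum_univ_four]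
  simp only [planarUnfolding, projFour_apply, Real.dist_eq, sq_abs, Matrix.cons_val_zero,
    Matrix.cons_val_one, Matrix.cons_val] at *
  nlinarith

theorem sqrt_two_lt_dist_planarUnfolding {m : ℕ} (j : Fin m) {a b : ℝ}
    {u w : EuclideanSpace ℝ (Fin (4 + m))} (hu : projFour m u = yPt a b)
    (hw : projFour m w = zPt a b) (hj : u (Fin.natAdd 4 j) ≠ w (Fin.natAdd 4 j)) :
    √2 < dist (planarUnfolding m j u) (planarUnfolding m j w) := by
  rw [EuclideanSpace.dist_eq]
  refine Real.sqrt_lt_sqrt (by norm_num) ?_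
  have hΔ : 0 < (u (Fin.natAdd 4 j) - w (Fin.natAdd 4 j)) ^ 2 := by
    positivity [sub_ne_zero.2 hj]
  simp only [Fin.sum_univ_three, planarUnfolding, hu, hw, yPt, zPt, WithLp.equiv_symm_apply,
    Matrix.cons_val_zero, Matrix.cons_val_one, Matrix.cons_val, Real.dist_eq, sq_abs]
  linarith

theorem stmt3_general (m : ℕ) (a b : ℝ)
    (f : ℝ → EuclideanSpace ℝ (Fin (4 + m))) (hf : ContinuousOn f (Set.Icc 0 1))
    (h0 : projFour m (f 0) = yPt a b) (h1 : projFour m (f 1) = zPt a b)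
    (hS : ∀ t ∈ Set.Icc (0 : ℝ) 1, projFour m (f t) ∈ S)
    (j : Fin m) (hj : f 0 (Fin.natAdd 4 j) ≠ f 1 (Fin.natAdd 4 j)) :
    ENNReal.ofReal (Real.sqrt 2) < eVariationOn f (Set.Icc 0 1) := by
  have hlocal : ∀ t ∈ Icc (0 : ℝ) 1, ∀ᶠ s in 𝓝[Icc 0 1] t,
      edist (planarUnfolding m j (f s)) (planarUnfolding m j (f t)) ≤ edist (f s) (f t) := by
    intro t ht
    have hπ : Tendsto (fun s => projFour m (f s)) (𝓝[Icc 0 1] t) (𝓝 (projFour m (f t))) :=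
      (continuous_projFour m).comp_continuousOn hf t ht
    filter_upwards [self_mem_nhdsWithin,
      hπ.eventually (eventually_forall_mem_imp_mem isClosed_face _)] with s hs hfaces
    obtain ⟨i, hi⟩ := mem_iUnion.1 (S_subset_iUnion_face (hS s hs))
    rw [edist_dist, edist_dist]
    exact ENNReal.ofReal_le_ofReal (dist_planarUnfolding_le j hi (hfaces i hi))
  calc ENNReal.ofReal √2 < edist (planarUnfolding m j (f 0)) (planarUnfolding m j (f 1)) := by
        rw [edist_dist]
        exact ENNReal.ofReal_lt_ofReal_iff_of_nonneg (by positivity) |>.2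
          (sqrt_two_lt_dist_planarUnfolding j h0 h1 hj)
    _ ≤ eVariationOn f (Icc 0 1) := edist_le_eVariationOn_of_eventually zero_le_one hlocal

theorem stmt3 (m : ℕ) (hm : 1 ≤ m) (a b : ℝ)
    (ha : a ∈ Set.Icc (0 : ℝ) 1) (hb : b ∈ Set.Icc (0 : ℝ) 1)
    (f : ℝ → EuclideanSpace ℝ (Fin (4 + m))) (hf : ContinuousOn f (Set.Icc 0 1))
    (h0 : projFour m (f 0) = yPt a b) (h1 : projFour m (f 1) = zPt a b)
    (hS : ∀ t ∈ Set.Icc (0 : ℝ) 1, projFour m (f t) ∈ S)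
    (j : Fin m) (hj : f 0 (Fin.natAdd 4 j) ≠ f 1 (Fin.natAdd 4 j)) :
    ENNReal.ofReal (Real.sqrt 2) < eVariationOn f (Set.Icc 0 1) :=
  stmt3_general m a b f hf h0 h1 hS j hj
end

section
/- Let n ≥ 1, let f : ℝ → EuclideanSpace ℝ (Fin (n+1)), and let g : ℝ → EuclideanSpace ℝ (Fin n) be the projection forgetting the last coordinate, g t i := f t (Fin.castSucc i). Let a ≤ b be real numbers and let L ≥ 0. If ENNReal.ofReal L ≤ eVariationOn g (Set.Icc a b), then ENNReal.ofReal (Real.sqrt (L^2 + (f b (Fin.last n) − f a (Fin.last n))^2)) ≤ eVariationOn f (Set.Icc a b). -/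
/-!
For weights with `c² + s² ≤ 1`, Cauchy–Schwarz bounds `c ‖g x - g y‖ + s |h x - h y|` by
`‖f x - f y‖`, where `h` is the last coordinate of `f`. Summing over a
partition of `[a, b]` that contains both endpoints and telescoping the `h`-increments gives
`c · Var g + s · |h b - h a| ≤ Var f`; the weights `(L, |Δ|) / √(L² + Δ²)` turn the left side
into `√(L² + Δ²)`.
-/

open scoped ENNReal
open Finset Set

lemma exists_monotone_Icc_extend {α : Type*} [LinearOrder α] {a b : α} (hab : a ≤ b)
    {u : ℕ → α} (hu : Monotone u) (us : ∀ i, u i ∈ Icc a b) (m : ℕ) :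
    ∃ v : ℕ → α, Monotone v ∧ (∀ i, v i ∈ Icc a b) ∧ v 0 = a ∧ v (m + 2) = b ∧
      ∀ i ≤ m, v (i + 1) = u i := by
  refine ⟨fun j => if j = 0 then a else if j ≤ m + 1 then u (j - 1) else b,
    monotone_nat_of_le_succ fun j => ?_, fun j => ?_, rfl, by simp, fun i hi => by simp [hi]⟩
  · split_ifs <;>
    first
    | contradiction
    | omega
    | exact le_rfl
    | exact hab
    | exact hu (by omega : j - 1 ≤ j + 1 - 1)
    | exact (us _).1
    | exact (us _).2
  · dsimp only
    split_ifs
    exacts [⟨le_rfl, hab⟩, us _, ⟨hab, le_rfl⟩]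

theorem mul_eVariationOn_add_mul_edist_le {α E F G : Type*} [LinearOrder α]
    [PseudoEMetricSpace E] [PseudoEMetricSpace F] [PseudoEMetricSpace G]
    {f : α → E} {φ : α → F} {ψ : α → G} {c s : ℝ≥0∞} {a b : α} (hab : a ≤ b)
    (h : ∀ x y, c * edist (φ x) (φ y) + s * edist (ψ x) (ψ y) ≤ edist (f x) (f y)) :
    c * eVariationOn φ (Icc a b) + s * edist (ψ a) (ψ b) ≤ eVariationOn f (Icc a b) := by
  have : Nonempty (ℕ × {u : ℕ → α // Monotone u ∧ ∀ i, u i ∈ Icc a b}) :=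
    ⟨(0, ⟨fun _ => a, monotone_const, fun _ => ⟨le_rfl, hab⟩⟩)⟩
  rw [eVariationOn, ENNReal.mul_iSup, ENNReal.iSup_add]
  refine iSup_le fun ⟨m, u, hu, us⟩ => ?_
  obtain ⟨v, hv, vs, hv0, hvm, hvu⟩ := exists_monotone_Icc_extend hab hu us m
  have hφ : ∑ i ∈ range m, edist (φ (u (i + 1))) (φ (u i)) ≤
      ∑ j ∈ range (m + 2), edist (φ (v (j + 1))) (φ (v j)) := by
    rw [sum_range_succ', sum_range_succ, add_assoc]
    refine le_add_right (sum_le_sum fun i hi => ?_)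
    rw [hvu _ (mem_range.1 hi).le, hvu _ (mem_range.1 hi)]
  have hψ :
      edist (ψ a) (ψ b) ≤ ∑ j ∈ range (m + 2), edist (ψ (v (j + 1))) (ψ (v j)) := by
    rw [← hv0, ← hvm]
    exact (edist_le_range_sum_edist (ψ ∘ v) _).trans_eq (sum_congr rfl fun _ _ => edist_comm _ _)
  calc c * ∑ i ∈ range m, edist (φ (u (i + 1))) (φ (u i)) + s * edist (ψ a) (ψ b)
      ≤ c * ∑ j ∈ range (m + 2), edist (φ (v (j + 1))) (φ (v j)) +
          s * ∑ j ∈ range (m + 2), edist (ψ (v (j + 1))) (ψ (v j)) := by gcongr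
    _ ≤ ∑ j ∈ range (m + 2), edist (f (v (j + 1))) (f (v j)) := by
      rw [mul_sum, mul_sum, ← sum_add_distrib]
      exact sum_le_sum fun j _ => h _ _
    _ ≤ eVariationOn f (Icc a b) := eVariationOn.sum_le hv vs

lemma mul_add_mul_le_sqrt_sq_add_sq {c s x y : ℝ} (h : c ^ 2 + s ^ 2 ≤ 1) :
    c * x + s * y ≤ √(x ^ 2 + y ^ 2) :=
  (le_abs_self _).trans <| Real.abs_le_sqrt <| by
    nlinarith [sq_nonneg (c * y - s * x),
      mul_le_mul_of_nonneg_right h (add_nonneg (sq_nonneg x) (sq_nonneg y))]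

lemma EuclideanSpace.dist_eq_sqrt_dist_castSucc_sq_add_sq {n : ℕ}
    {x y : EuclideanSpace ℝ (Fin (n + 1))} {p q : EuclideanSpace ℝ (Fin n)}
    (hp : ∀ i, p i = x (Fin.castSucc i)) (hq : ∀ i, q i = y (Fin.castSucc i)) :
    dist x y = √(dist p q ^ 2 + (x (Fin.last n) - y (Fin.last n)) ^ 2) := by
  rw [EuclideanSpace.dist_eq x y, EuclideanSpace.dist_eq p q, Real.sq_sqrt (by positivity),
    Fin.sum_univ_castSucc, Real.dist_eq, sq_abs]
  simp only [hp, hq]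

theorem stmt6_general (n : ℕ) (f : ℝ → EuclideanSpace ℝ (Fin (n + 1)))
    (g : ℝ → EuclideanSpace ℝ (Fin n))
    (hg : ∀ t : ℝ, ∀ i : Fin n, g t i = f t (Fin.castSucc i))
    (a b : ℝ) (hab : a ≤ b) (L : ℝ) (hL : 0 ≤ L)
    (h : ENNReal.ofReal L ≤ eVariationOn g (Set.Icc a b)) :
    ENNReal.ofReal (Real.sqrt (L ^ 2 + (f b (Fin.last n) - f a (Fin.last n)) ^ 2)) ≤
      eVariationOn f (Set.Icc a b) := by
  set Δ := f b (Fin.last n) - f a (Fin.last n)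
  set R := √(L ^ 2 + Δ ^ 2)
  have hR0 : 0 ≤ R := Real.sqrt_nonneg _
  obtain hR | hR := hR0.eq_or_lt
  · rw [← hR, ENNReal.ofReal_zero]
    exact zero_le
  have hR2 : R ^ 2 = L ^ 2 + Δ ^ 2 := Real.sq_sqrt (by positivity)
  have hcs : (L / R) ^ 2 + (|Δ| / R) ^ 2 ≤ 1 := by
    rw [div_pow, div_pow, sq_abs, ← add_div, ← hR2, div_self (by positivity)]
  have hf : ∀ x y, ENNReal.ofReal (L / R) * edist (g x) (g y) +
      ENNReal.ofReal (|Δ| / R) * edist (f x (Fin.last n)) (f y (Fin.last n)) ≤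
        edist (f x) (f y) := by
    intro x y
    simp only [edist_dist, Real.dist_eq]
    rw [← ENNReal.ofReal_mul (by positivity), ← ENNReal.ofReal_mul (by positivity),
      ← ENNReal.ofReal_add (by positivity) (by positivity),
      EuclideanSpace.dist_eq_sqrt_dist_castSucc_sq_add_sq (hg x) (hg y), ← sq_abs (f x _ - _)]
    exact ENNReal.ofReal_le_ofReal (mul_add_mul_le_sqrt_sq_add_sq hcs)
  calc ENNReal.ofReal R
      = ENNReal.ofReal (L / R) * ENNReal.ofReal L +
          ENNReal.ofReal (|Δ| / R) * ENNReal.ofReal |Δ| := by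
        rw [← ENNReal.ofReal_mul (by positivity), ← ENNReal.ofReal_mul (by positivity),
          ← ENNReal.ofReal_add (by positivity) (by positivity)]
        field_simp
        rw [sq_abs, ← hR2, sq, mul_self_div_self]
    _ ≤ ENNReal.ofReal (L / R) * eVariationOn g (Icc a b) +
          ENNReal.ofReal (|Δ| / R) * edist (f a (Fin.last n)) (f b (Fin.last n)) := by
        rw [edist_comm, edist_dist, Real.dist_eq]
        gcongr
    _ ≤ eVariationOn f (Icc a b) := mul_eVariationOn_add_mul_edist_le hab hf

theorem stmt6 (n : ℕ) (hn : 1 ≤ n) (f : ℝ → EuclideanSpace ℝ (Fin (n + 1)))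
    (g : ℝ → EuclideanSpace ℝ (Fin n))
    (hg : ∀ t : ℝ, ∀ i : Fin n, g t i = f t (Fin.castSucc i))
    (a b : ℝ) (hab : a ≤ b) (L : ℝ) (hL : 0 ≤ L)
    (h : ENNReal.ofReal L ≤ eVariationOn g (Set.Icc a b)) :
    ENNReal.ofReal (Real.sqrt (L ^ 2 + (f b (Fin.last n) - f a (Fin.last n)) ^ 2)) ≤
      eVariationOn f (Set.Icc a b) :=
  stmt6_general n f g hg a b hab L hL h
end
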